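/- Let σ, ρ > 0 and N ≥ 1, and let b_k = N!/(k!((N-k)/2)!) · ((ρ+σ)/(2σ(2ρ+σ)))^{(N-k)/2} if N-k is even and b_k = 0 if N-k is odd, for k = 0,…,N-1. Then for every λ ∈ ℂ, λ^N + Σ_{k=0}^{N-1} b_k λ^k = (-i √((ρ+σ)/(2σ(2ρ+σ))))^N · H_N( i √(σ(2ρ+σ)/(2(ρ+σ))) · λ ). -/

import Mathlib

open Real MeasureTheory Finset Nat

/-- Physicist's Hermite polynomial via the Rodrigues formula, extended to complex
arguments (the Rodrigues formula applied to the entire function `e^{-z²}`). -/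
noncomputable def hermiteHC (n : ℕ) (z : ℂ) : ℂ :=
  (-1 : ℂ) ^ n * Complex.exp (z ^ 2) * iteratedDeriv n (fun w => Complex.exp (-w ^ 2)) z

/-- The explicit coefficients `b_k`. -/
noncomputable def bcoef (σ ρ : ℝ) (N k : ℕ) : ℝ :=
  if (N - k) % 2 = 0 then
    (N ! : ℝ) / ((k ! : ℝ) * (((N - k) / 2)! : ℝ)) *
      ((ρ + σ) / (2 * σ * (2 * ρ + σ))) ^ ((N - k) / 2)
  else 0

/-!
Rodrigues' formula for `exp (-w ^ 2)` gives `hermiteHC n z = √2 ^ n * He_n (√2 * z)`, with `He_n`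
Mathlib's probabilists' Hermite polynomial, whose coefficient in degree `k = N - 2j` is
`(-1) ^ j * (2j - 1)‼ * choose N k`. If `2 c d = 1`, the degree-`k` term of `c ^ N * H_N (d * x)`
carries `c ^ 2j * (2 c d) ^ k`, so it is `N! / (k! j!) * (-c ^ 2) ^ j * x ^ k` by
`(2j)! = 2 ^ j * j ! * (2j - 1)‼`. Here `c = -i √r` and `d = i √s`, where
`r = (ρ + σ) / (2σ(2ρ + σ))` and `s = 1 / (4r)`, so that `-c ^ 2 = r`.
-/

open Polynomial

theorem factorial_two_mul_eq (n : ℕ) : (2 * n)! = 2 ^ n * n ! * (2 * n - 1)‼ := by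
  rcases n with _ | n
  · rfl
  · rw [show 2 * (n + 1) = (2 * n + 1) + 1 by ring, factorial_eq_mul_doubleFactorial,
      show 2 * n + 1 + 1 = 2 * (n + 1) by ring, doubleFactorial_two_mul]
    rfl

theorem iteratedDeriv_cexp_neg_mul_sq_div_two (a : ℂ) (n : ℕ) (z : ℂ) :
    iteratedDeriv n (fun w => Complex.exp (-(a * w) ^ 2 / 2)) z
      = (-a) ^ n * aeval (a * z) (hermite n) * Complex.exp (-(a * z) ^ 2 / 2) := by
  induction n generalizing z with
  | zero => simp
  | succ n ih =>
    rw [iteratedDeriv_succ, funext ih]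
    have hlin : HasDerivAt (fun w : ℂ => a * w) a z := by
      simpa using (hasDerivAt_id z).const_mul a
    have hexp : HasDerivAt (fun w : ℂ => Complex.exp (-(a * w) ^ 2 / 2))
        (Complex.exp (-(a * z) ^ 2 / 2) * (-(a * z) * a)) z := by
      refine (((hlin.fun_pow 2).fun_neg.div_const 2).congr_deriv ?_).cexp
      norm_num
      ring
    have hpoly : HasDerivAt (fun w : ℂ => aeval (a * w) (hermite n))
        (aeval (a * z) (derivative (hermite n)) * a) z :=
      ((hermite n).hasDerivAt_aeval (a * z)).comp z hlin
    rw [((hpoly.const_mul ((-a) ^ n)).fun_mul hexp).deriv, hermite_succ]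
    simp only [map_sub, map_mul, aeval_X]
    ring

theorem hermiteHC_eq_aeval_hermite (n : ℕ) (z : ℂ) :
    hermiteHC n z = (√2 : ℂ) ^ n * aeval (√2 * z) (hermite n) := by
  have hsq : ((√2 : ℝ) : ℂ) ^ 2 = 2 := by norm_cast; simp
  have hfun : (fun w : ℂ => Complex.exp (-w ^ 2))
      = fun w => Complex.exp (-(√2 * w) ^ 2 / 2) := by
    funext w; rw [mul_pow, hsq]; ring_nf
  have hsign : (-1 : ℂ) ^ n * (-√2) ^ n = (√2) ^ n := by rw [← mul_pow, neg_one_mul, neg_neg]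
  have hexp : Complex.exp (z ^ 2) * Complex.exp (-(√2 * z) ^ 2 / 2) = 1 := by
    rw [← Complex.exp_add, mul_pow, hsq, ← Complex.exp_zero]; ring_nf
  rw [hermiteHC, hfun, iteratedDeriv_cexp_neg_mul_sq_div_two]
  calc _ = (-1 : ℂ) ^ n * (-√2) ^ n * aeval (√2 * z) (hermite n)
        * (Complex.exp (z ^ 2) * Complex.exp (-(√2 * z) ^ 2 / 2)) := by ring
    _ = _ := by rw [hsign, hexp, mul_one]

theorem factorial_div_eq_doubleFactorial_mul_choose (j k : ℕ) {K : Type*} [Field K] [CharZero K] :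
    ((2 * j + k)! / (k ! * j !) : K) = (2 * j - 1)‼ * (2 * j + k).choose k * 2 ^ j := by
  rw [div_eq_iff (by simp [Nat.factorial_ne_zero]),
    ← Nat.choose_mul_factorial_mul_factorial (Nat.le_add_left k (2 * j)),
    Nat.add_sub_cancel, factorial_two_mul_eq]
  push_cast
  ring

theorem pow_mul_aeval_hermite {K : Type*} [Field K] [CharZero K] (N : ℕ) (u v x : K)
    (huv : u * v = 1) :
    u ^ N * aeval (v * x) (hermite N) = ∑ k ∈ range (N + 1),
      (if (N - k) % 2 = 0 then
        (N ! : K) / (k ! * ((N - k) / 2)!) * (-u ^ 2 / 2) ^ ((N - k) / 2) else 0) * x ^ k := by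
  rw [aeval_eq_sum_range, natDegree_hermite, mul_sum]
  refine sum_congr rfl fun k hk => ?_
  have hkN : k ≤ N := Nat.lt_succ_iff.mp (mem_range.mp hk)
  split_ifs with hpar
  · obtain ⟨j, rfl⟩ : ∃ j, N = 2 * j + k := ⟨(N - k) / 2, by omega⟩
    have hukvk : u ^ k * v ^ k = 1 := by rw [← mul_pow, huv, one_pow]
    have hhalf : 2 ^ j * (-u ^ 2 / 2) ^ j = (-1) ^ j * (u ^ 2) ^ j := by
      rw [← mul_pow, mul_div_cancel₀ _ two_ne_zero, neg_pow]
    rw [show (2 * j + k - k) / 2 = j by omega, factorial_div_eq_doubleFactorial_mul_choose,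
      coeff_hermite_explicit, zsmul_eq_mul, pow_add, pow_mul, mul_pow v x]
    push_cast
    linear_combination ((-1) ^ j * (u ^ 2) ^ j * ((2 * j - 1)‼ : K) * (2 * j + k).choose k * x ^ k)
      * hukvk - (((2 * j - 1)‼ : K) * (2 * j + k).choose k * x ^ k) * hhalf
  · rw [coeff_hermite_of_odd_add (by grind), zero_smul, mul_zero, zero_mul]

theorem pow_mul_hermiteHC (N : ℕ) (c d x : ℂ) (hcd : 2 * c * d = 1) :
    c ^ N * hermiteHC N (d * x) = ∑ k ∈ range (N + 1),
      (if (N - k) % 2 = 0 then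
        (N ! : ℂ) / (k ! * ((N - k) / 2)!) * (-c ^ 2) ^ ((N - k) / 2) else 0) * x ^ k := by
  have hsq : ((√2 : ℝ) : ℂ) ^ 2 = 2 := by norm_cast; simp
  have huv : c * √2 * (√2 * d) = 1 := by linear_combination c * d * hsq + hcd
  have hu : -(c * √2) ^ 2 / 2 = -c ^ 2 := by rw [mul_pow, hsq]; ring
  rw [hermiteHC_eq_aeval_hermite, ← mul_assoc, ← mul_pow, ← mul_assoc (√2 : ℂ),
    pow_mul_aeval_hermite N _ _ x huv, hu]

theorem stmt1_general (σ ρ : ℝ) (hσ : 0 < σ) (hρ : 0 < ρ) (N : ℕ) :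
    ∀ lam : ℂ,
      lam ^ N + ∑ k ∈ Finset.range N, (bcoef σ ρ N k : ℂ) * lam ^ k
        = (-Complex.I * (Real.sqrt ((ρ + σ) / (2 * σ * (2 * ρ + σ))) : ℂ)) ^ N *
            hermiteHC N
              (Complex.I * (Real.sqrt (σ * (2 * ρ + σ) / (2 * (ρ + σ))) : ℂ) * lam) := by
  intro lam
  have hbN : (bcoef σ ρ N N : ℂ) = 1 := by simp [bcoef, Nat.factorial_ne_zero]
  rw [← one_mul (lam ^ N), ← hbN, add_comm, ← sum_range_succ]
  simp only [bcoef]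
  set r : ℝ := (ρ + σ) / (2 * σ * (2 * ρ + σ))
  set s : ℝ := σ * (2 * ρ + σ) / (2 * (ρ + σ))
  have hr : 0 ≤ r := by positivity
  have hsqrt : (√r * √s : ℂ) = 1 / 2 := by
    rw [← Complex.ofReal_mul, ← Real.sqrt_mul hr,
      show r * s = (1 / 2) ^ 2 by simp only [r, s]; field_simp, Real.sqrt_sq (by norm_num)]
    norm_num
  have hsqr : ((√r : ℝ) : ℂ) ^ 2 = r := by norm_cast; exact Real.sq_sqrt hr
  have hcd : 2 * (-Complex.I * √r) * (Complex.I * √s) = 1 := by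
    linear_combination (-2 * √r * √s : ℂ) * Complex.I_sq + 2 * hsqrt
  rw [pow_mul_hermiteHC N _ _ lam hcd, mul_pow, neg_sq, Complex.I_sq, hsqr, neg_one_mul, neg_neg]
  refine sum_congr rfl fun k _ => ?_
  push_cast [apply_ite]
  rfl

/-- the characteristic polynomial with coefficients `b_k` is a weighted
scaled Hermite polynomial. -/
theorem stmt1 (σ ρ : ℝ) (hσ : 0 < σ) (hρ : 0 < ρ) (N : ℕ) (hN : 1 ≤ N) :
    ∀ lam : ℂ,
      lam ^ N + ∑ k ∈ Finset.range N, (bcoef σ ρ N k : ℂ) * lam ^ k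
        = (-Complex.I * (Real.sqrt ((ρ + σ) / (2 * σ * (2 * ρ + σ))) : ℂ)) ^ N *
            hermiteHC N
              (Complex.I * (Real.sqrt (σ * (2 * ρ + σ) / (2 * (ρ + σ))) : ℂ) * lam) :=
  stmt1_general σ ρ hσ hρ N
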